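/- Let 1 ≤ p < ∞ and r > 0. Then for every nonnegative measurable function f on (0,∞), ( ∫₀^∞ ( ∫_x^∞ f(y) dy )^p x^{r-1} dx )^{1/p} ≤ (p/r) ( ∫₀^∞ (y f(y))^p y^{r-1} dy )^{1/p}. -/

import Mathlib

/-!
Hölder's inequality against the weight `y ^ (-1 - r/p)` on `(x, ∞)`, whose mass is
`(p/r) x ^ (-r/p)`, gives
`(∫_x^∞ f) ^ p ≤ (p/r) ^ (p-1) x ^ (-r(p-1)/p) ∫_x^∞ f(y) ^ p y ^ ((p-1)(1 + r/p)) dy`.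
Multiplying by `x ^ (r-1)`, integrating in `x` and exchanging the order of integration over
`0 < x < y`, the inner integral is `∫_0^y x ^ (r/p - 1) dx = (p/r) y ^ (r/p)`, which produces
the constant `(p/r) ^ p`.
-/

open MeasureTheory Set
open scoped ENNReal

theorem rpow_lintegral_mul_le {α : Type*} [MeasurableSpace α] {μ : Measure α}
    {p : ℝ} (hp : 1 ≤ p) {g w : α → ℝ≥0∞} (hg : AEMeasurable g μ) (hw : Measurable w) :
    (∫⁻ a, g a * w a ∂μ) ^ p ≤ (∫⁻ a, w a ∂μ) ^ (p - 1) * ∫⁻ a, g a ^ p * w a ∂μ := by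
  have hp0 : 0 < p := zero_lt_one.trans_le hp
  have h := eLpNorm'_le_eLpNorm'_mul_rpow_measure_univ zero_lt_one hp
    (hg.mono_ac (withDensity_absolutelyContinuous μ w)).aestronglyMeasurable
  simp only [eLpNorm'_eq_lintegral_enorm, enorm_eq_self, ENNReal.rpow_one, div_one,
    withDensity_apply _ MeasurableSet.univ, Measure.restrict_univ] at h
  rw [lintegral_withDensity_eq_lintegral_mul₀ hw.aemeasurable hg,
    lintegral_withDensity_eq_lintegral_mul₀ hw.aemeasurable (hg.pow_const p)] at h
  calc (∫⁻ a, g a * w a ∂μ) ^ p = (∫⁻ a, (w * g) a ∂μ) ^ p := by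
        simp only [Pi.mul_apply, mul_comm]
    _ ≤ ((∫⁻ a, (w * fun a => g a ^ p) a ∂μ) ^ (1 / p) * (∫⁻ a, w a ∂μ) ^ (1 - 1 / p)) ^ p := by
        gcongr
    _ = _ := by
        rw [ENNReal.mul_rpow_of_nonneg _ _ hp0.le, ← ENNReal.rpow_mul, ← ENNReal.rpow_mul,
          one_div_mul_cancel hp0.ne', ENNReal.rpow_one, sub_mul, one_div_mul_cancel hp0.ne',
          one_mul, mul_comm]
        simp only [Pi.mul_apply, mul_comm]

theorem ofReal_rpow_mul_ofReal_rpow {x : ℝ} (hx : 0 < x) (a b : ℝ) :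
    ENNReal.ofReal (x ^ a) * ENNReal.ofReal (x ^ b) = ENNReal.ofReal (x ^ (a + b)) := by
  rw [← ENNReal.ofReal_mul (Real.rpow_nonneg hx.le a), Real.rpow_add hx]

theorem lintegral_Ioi_rpow_neg_sub_one {t x : ℝ} (ht : 0 < t) (hx : 0 < x) :
    ∫⁻ y in Ioi x, ENNReal.ofReal (y ^ (-t - 1)) = ENNReal.ofReal (x ^ (-t) / t) := by
  have hlt : -t - 1 < -1 := by linarith
  rw [← ofReal_integral_eq_lintegral_ofReal (integrableOn_Ioi_rpow_of_lt hlt hx)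
      (ae_restrict_of_forall_mem measurableSet_Ioi fun y hy =>
        Real.rpow_nonneg (hx.trans hy).le _),
    integral_Ioi_rpow_of_lt hlt hx, sub_add_cancel, neg_div_neg_eq]

theorem lintegral_Ioo_zero_rpow_sub_one {ν b : ℝ} (hν : 0 < ν) (hb : 0 < b) :
    ∫⁻ x in Ioo 0 b, ENNReal.ofReal (x ^ (ν - 1)) = ENNReal.ofReal (b ^ ν / ν) := by
  have hint : IntegrableOn (fun x : ℝ => x ^ (ν - 1)) (Ioc 0 b) := by
    rw [← intervalIntegrable_iff_integrableOn_Ioc_of_le hb.le]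
    exact intervalIntegral.intervalIntegrable_rpow' (by linarith)
  rw [Measure.restrict_congr_set Ioo_ae_eq_Ioc,
    ← ofReal_integral_eq_lintegral_ofReal hint
      (ae_restrict_of_forall_mem measurableSet_Ioc fun y hy => Real.rpow_nonneg hy.1.le _),
    ← intervalIntegral.integral_of_le hb.le, integral_rpow (Or.inl (by linarith)),
    sub_add_cancel, Real.zero_rpow hν.ne', sub_zero]

theorem lintegral_mul_setLIntegral_Ioi_swap {μ : Measure ℝ} [SFinite μ]
    {A W : ℝ → ℝ≥0∞} (hA : Measurable A) (hW : Measurable W) :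
    ∫⁻ x, A x * ∫⁻ y in Ioi x, W y ∂μ ∂μ = ∫⁻ y, W y * ∫⁻ x in Iio y, A x ∂μ ∂μ := by
  let F : ℝ → ℝ → ℝ≥0∞ := fun x y => if x < y then A x * W y else 0
  have hF : Measurable (Function.uncurry F) :=
    Measurable.ite (measurableSet_lt measurable_fst measurable_snd)
      ((hA.comp measurable_fst).mul (hW.comp measurable_snd)) measurable_const
  have hx : ∀ x, A x * ∫⁻ y in Ioi x, W y ∂μ = ∫⁻ y, F x y ∂μ := fun x => by
    rw [← lintegral_const_mul _ hW, ← lintegral_indicator measurableSet_Ioi]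
    rfl
  have hy : ∀ y, W y * ∫⁻ x in Iio y, A x ∂μ = ∫⁻ x, F x y ∂μ := fun y => by
    rw [mul_comm, ← lintegral_mul_const _ hA, ← lintegral_indicator measurableSet_Iio]
    rfl
  simp_rw [hx, hy]
  exact lintegral_lintegral_swap hF.aemeasurable

theorem setLIntegral_Ioi_mul_setLIntegral_Ioi_swap {A W : ℝ → ℝ≥0∞}
    (hA : Measurable A) (hW : Measurable W) :
    ∫⁻ x in Ioi 0, A x * ∫⁻ y in Ioi x, W y = ∫⁻ y in Ioi 0, W y * ∫⁻ x in Ioo 0 y, A x := by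
  have h := lintegral_mul_setLIntegral_Ioi_swap (μ := volume.restrict (Ioi 0)) hA hW
  simp only [Measure.restrict_restrict measurableSet_Ioi,
    Measure.restrict_restrict measurableSet_Iio, Ioi_inter_Ioi, Iio_inter_Ioi] at h
  rw [← h]
  refine setLIntegral_congr_fun measurableSet_Ioi fun x hx => ?_
  rw [max_eq_left hx.le]

theorem rpow_setLIntegral_Ioi_le {p α x : ℝ} (hp : 1 ≤ p) (hα : 0 < α) (hx : 0 < x)
    {g : ℝ → ℝ≥0∞} (hg : Measurable g) :
    (∫⁻ y in Ioi x, g y) ^ p ≤ ENNReal.ofReal (x ^ (-α) / α) ^ (p - 1) *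
      ∫⁻ y in Ioi x, g y ^ p * ENNReal.ofReal (y ^ ((p - 1) * (1 + α))) := by
  have hp0 : 0 ≤ p := zero_le_one.trans hp
  calc (∫⁻ y in Ioi x, g y) ^ p
      = (∫⁻ y in Ioi x,
          (g y * ENNReal.ofReal (y ^ (1 + α))) * ENNReal.ofReal (y ^ (-α - 1))) ^ p := by
        congr 1
        refine setLIntegral_congr_fun measurableSet_Ioi fun y hy => ?_
        rw [mul_assoc, ofReal_rpow_mul_ofReal_rpow (hx.trans hy),
          show 1 + α + (-α - 1) = 0 by ring, Real.rpow_zero, ENNReal.ofReal_one, mul_one]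
    _ ≤ _ := rpow_lintegral_mul_le hp (by fun_prop) (by fun_prop)
    _ = _ := by
      rw [lintegral_Ioi_rpow_neg_sub_one hα hx]
      congr 1
      refine setLIntegral_congr_fun measurableSet_Ioi fun y hy => ?_
      have hy0 : 0 < y := hx.trans hy
      rw [ENNReal.mul_rpow_of_nonneg _ _ hp0, ENNReal.ofReal_rpow_of_pos (by positivity),
        ← Real.rpow_mul hy0.le, mul_assoc, ofReal_rpow_mul_ofReal_rpow hy0]
      ring_nf

theorem lintegral_rpow_setLIntegral_Ioi_mul_le {p r : ℝ} (hp : 1 ≤ p) (hr : 0 < r)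
    {g : ℝ → ℝ≥0∞} (hg : Measurable g) :
    ∫⁻ x in Ioi 0, (∫⁻ y in Ioi x, g y) ^ p * ENNReal.ofReal (x ^ (r - 1))
      ≤ ENNReal.ofReal ((p / r) ^ p) *
        ∫⁻ y in Ioi 0, (ENNReal.ofReal y * g y) ^ p * ENNReal.ofReal (y ^ (r - 1)) := by
  have hp0 : 0 < p := zero_lt_one.trans_le hp
  have hα : 0 < r / p := div_pos hr hp0
  set W : ℝ → ℝ≥0∞ := fun y => g y ^ p * ENNReal.ofReal (y ^ ((p - 1) * (1 + r / p)))
  set A : ℝ → ℝ≥0∞ := fun x => ENNReal.ofReal (x ^ (r / p - 1))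
  have hW : Measurable W := by fun_prop
  have hA : Measurable A := by fun_prop
  have hJ : Measurable fun x => ∫⁻ y in Ioi x, W y :=
    Antitone.measurable fun a b hab => lintegral_mono_set (Ioi_subset_Ioi hab)
  have pointwise : ∀ x ∈ Ioi (0 : ℝ), (∫⁻ y in Ioi x, g y) ^ p * ENNReal.ofReal (x ^ (r - 1))
      ≤ ENNReal.ofReal ((p / r) ^ (p - 1)) * (A x * ∫⁻ y in Ioi x, W y) := fun x hx => by
    have hx : 0 < x := hx
    calc (∫⁻ y in Ioi x, g y) ^ p * ENNReal.ofReal (x ^ (r - 1))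
        ≤ ENNReal.ofReal (x ^ (-(r / p)) / (r / p)) ^ (p - 1) * (∫⁻ y in Ioi x, W y) *
            ENNReal.ofReal (x ^ (r - 1)) := by
          gcongr
          exact rpow_setLIntegral_Ioi_le hp hα hx hg
      _ = _ := by
        have hexp : -(r / p) * (p - 1) + (r - 1) = r / p - 1 := by field_simp; ring
        rw [ENNReal.ofReal_rpow_of_nonneg (by positivity) (by linarith), div_eq_mul_inv, inv_div,
          Real.mul_rpow (by positivity) (by positivity), ← Real.rpow_mul hx.le,
          ENNReal.ofReal_mul (by positivity)]
        calc _ = ENNReal.ofReal ((p / r) ^ (p - 1)) *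
              (ENNReal.ofReal (x ^ (-(r / p) * (p - 1))) * ENNReal.ofReal (x ^ (r - 1)) *
                ∫⁻ y in Ioi x, W y) := by ring
          _ = _ := by rw [ofReal_rpow_mul_ofReal_rpow hx, hexp]
  have inner : ∀ y ∈ Ioi (0 : ℝ), W y * ∫⁻ x in Ioo 0 y, A x
      = ENNReal.ofReal (p / r) * ((ENNReal.ofReal y * g y) ^ p * ENNReal.ofReal (y ^ (r - 1))) :=
    fun y hy => by
    have hy : 0 < y := hy
    have hexp : (p - 1) * (1 + r / p) + r / p = p + (r - 1) := by field_simp; ring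
    rw [lintegral_Ioo_zero_rpow_sub_one hα hy, div_eq_mul_inv, inv_div,
      ENNReal.ofReal_mul (by positivity), ENNReal.mul_rpow_of_nonneg _ _ hp0.le,
      ENNReal.ofReal_rpow_of_pos hy]
    calc _ = ENNReal.ofReal (p / r) *
          (g y ^ p * (ENNReal.ofReal (y ^ ((p - 1) * (1 + r / p))) *
            ENNReal.ofReal (y ^ (r / p)))) := by ring
      _ = ENNReal.ofReal (p / r) * (g y ^ p * (ENNReal.ofReal (y ^ p) *
          ENNReal.ofReal (y ^ (r - 1)))) := by
        rw [ofReal_rpow_mul_ofReal_rpow hy, ofReal_rpow_mul_ofReal_rpow hy, hexp]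
      _ = _ := by ring
  calc ∫⁻ x in Ioi 0, (∫⁻ y in Ioi x, g y) ^ p * ENNReal.ofReal (x ^ (r - 1))
      ≤ ∫⁻ x in Ioi 0, ENNReal.ofReal ((p / r) ^ (p - 1)) * (A x * ∫⁻ y in Ioi x, W y) :=
        setLIntegral_mono (by fun_prop) pointwise
    _ = ENNReal.ofReal ((p / r) ^ (p - 1)) * ∫⁻ y in Ioi 0, W y * ∫⁻ x in Ioo 0 y, A x := by
        rw [lintegral_const_mul' _ _ ENNReal.ofReal_ne_top,
          setLIntegral_Ioi_mul_setLIntegral_Ioi_swap hA hW]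
    _ = _ := by
        rw [setLIntegral_congr_fun measurableSet_Ioi inner,
          lintegral_const_mul' _ _ ENNReal.ofReal_ne_top, ← mul_assoc,
          ← ENNReal.ofReal_mul (by positivity), Real.rpow_sub_one (by positivity),
          div_mul_cancel₀ _ (by positivity)]

theorem stmt2_general (p r : ℝ) (hp : 1 ≤ p) (hr : 0 < r) (f : ℝ → ℝ)
    (hf : Measurable f) :
    (∫⁻ x in Set.Ioi (0:ℝ),
        (∫⁻ y in Set.Ioi x, ENNReal.ofReal (f y)) ^ p *
          ENNReal.ofReal (x ^ (r - 1))) ^ (1/p)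
      ≤ ENNReal.ofReal (p / r) *
        (∫⁻ y in Set.Ioi (0:ℝ),
          ENNReal.ofReal (y * f y) ^ p * ENNReal.ofReal (y ^ (r - 1))) ^ (1/p) := by
  have hp0 : 0 < p := zero_lt_one.trans_le hp
  have hfy : ∫⁻ y in Ioi 0, ENNReal.ofReal (y * f y) ^ p * ENNReal.ofReal (y ^ (r - 1))
      = ∫⁻ y in Ioi 0, (ENNReal.ofReal y * ENNReal.ofReal (f y)) ^ p *
          ENNReal.ofReal (y ^ (r - 1)) :=
    setLIntegral_congr_fun measurableSet_Ioi fun y hy => by rw [ENNReal.ofReal_mul hy.le]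
  calc _ ≤ (ENNReal.ofReal ((p / r) ^ p) * ∫⁻ y in Ioi 0,
        ENNReal.ofReal (y * f y) ^ p * ENNReal.ofReal (y ^ (r - 1))) ^ (1 / p) := by
        rw [hfy]
        gcongr
        exact lintegral_rpow_setLIntegral_Ioi_mul_le hp hr hf.ennreal_ofReal
    _ = _ := by
        rw [ENNReal.mul_rpow_of_nonneg _ _ (by positivity),
          ENNReal.ofReal_rpow_of_nonneg (by positivity) (by positivity),
          ← Real.rpow_mul (by positivity), mul_one_div_cancel hp0.ne', Real.rpow_one]

theorem stmt2 (p r : ℝ) (hp : 1 ≤ p) (hr : 0 < r) (f : ℝ → ℝ)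
    (hf : Measurable f) (hf0 : ∀ x, 0 ≤ f x) :
    (∫⁻ x in Set.Ioi (0:ℝ),
        (∫⁻ y in Set.Ioi x, ENNReal.ofReal (f y)) ^ p *
          ENNReal.ofReal (x ^ (r - 1))) ^ (1/p)
      ≤ ENNReal.ofReal (p / r) *
        (∫⁻ y in Set.Ioi (0:ℝ),
          ENNReal.ofReal (y * f y) ^ p * ENNReal.ofReal (y ^ (r - 1))) ^ (1/p) :=
  stmt2_general p r hp hr f hf
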